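/- Let q ≥ 2 be an integer and let P and Q be probability vectors on Fin q with equal Shannon entropies, H(P) = H(Q). Suppose the (q - 1) least likely outcomes of P are equally likely, i.e. there is an index i* with P i* = max i, P i and P j = (1 - max i, P i) / (q - 1) for j ≠ i*. Then max i, P i ≥ max i, Q i, with strict inequality if the (q - 1) least likely outcomes of Q are not all equally likely. -/

import Mathlib

/-!
If all entries but the largest one `m` are equal, the entropy is `qaryEntropy q (1 - m)`.
By Jensen's inequality for the concave function `-x log x` on the `q - 1` remaining entries,
every other probability vector with largest entry `m` has at most this entropy, strictly less
unless those entries are equal. Since `qaryEntropy q` is strictly increasing on `[0, 1 - 1/q]`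
and the largest entry lies in `[1/q, 1]`, equal entropies force the flat-tailed vector to have
the larger maximum.
-/

open Real Finset

/-- The maximum entry of a vector on `Fin q`, `q > 0`. -/
noncomputable def vmax (q : ℕ) (hq : 0 < q) (p : Fin q → ℝ) : ℝ :=
  Finset.univ.sup' ⟨⟨0, hq⟩, Finset.mem_univ _⟩ p

section Jensen

variable {ι : Type*} {s : Finset ι} {x : ι → ℝ}

lemma sum_negMulLog_le_card_mul_negMulLog_avg (hs : s.Nonempty) (hx : ∀ i ∈ s, 0 ≤ x i) :
    ∑ i ∈ s, negMulLog (x i) ≤ #s * negMulLog ((∑ i ∈ s, x i) / #s) := by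
  have hn : (0 : ℝ) < #s := by exact_mod_cast hs.card_pos
  have h := strictConcaveOn_negMulLog.concaveOn.le_map_sum (t := s) (w := fun _ => (#s : ℝ)⁻¹)
    (p := x) (fun _ _ => by positivity) (by simp [hn.ne']) hx
  simp only [smul_eq_mul, ← mul_sum] at h
  rw [div_eq_inv_mul]
  calc ∑ i ∈ s, negMulLog (x i) = #s * ((#s : ℝ)⁻¹ * ∑ i ∈ s, negMulLog (x i)) := by
        rw [mul_inv_cancel_left₀ hn.ne']
    _ ≤ _ := by gcongr

lemma sum_negMulLog_lt_card_mul_negMulLog_avg (hx : ∀ i ∈ s, 0 ≤ x i)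
    (hne : ∃ j ∈ s, x j ≠ (∑ i ∈ s, x i) / #s) :
    ∑ i ∈ s, negMulLog (x i) < #s * negMulLog ((∑ i ∈ s, x i) / #s) := by
  obtain ⟨j, hj, hxj⟩ := hne
  have hn : (0 : ℝ) < #s := by exact_mod_cast card_pos.2 ⟨j, hj⟩
  refine lt_of_le_of_ne (sum_negMulLog_le_card_mul_negMulLog_avg ⟨j, hj⟩ hx) fun heq => hxj ?_
  have hw : ∀ i ∈ s, (0 : ℝ) < (#s : ℝ)⁻¹ := fun _ _ => by positivity
  have h := (strictConcaveOn_negMulLog.map_sum_eq_iff hw (by simp [hn.ne']) hx).1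
  simp only [smul_eq_mul] at h
  refine (h ?_ j hj).trans ?_
  · rw [← mul_sum, ← mul_sum, inv_mul_eq_div, heq, inv_mul_cancel_left₀ hn.ne']
  · rw [← mul_sum, inv_mul_eq_div]

end Jensen

lemma mul_negMulLog_div {n : ℝ} (hn : 0 < n) (S : ℝ) :
    n * negMulLog (S / n) = negMulLog S + S * log n := by
  rcases eq_or_ne S 0 with rfl | hS
  · simp
  · simp only [negMulLog, log_div hS hn.ne']
    field_simp
    ring

lemma qaryEntropy_one_sub {q : ℕ} (hq : 2 ≤ q) (m : ℝ) :
    qaryEntropy q (1 - m) = negMulLog m + (q - 1) * negMulLog ((1 - m) / (q - 1)) := by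
  have hq1 : (0 : ℝ) < q - 1 := by
    have : (2 : ℝ) ≤ q := by exact_mod_cast hq
    linarith
  rw [mul_negMulLog_div hq1, qaryEntropy, binEntropy_eq_negMulLog_add_negMulLog_one_sub]
  push_cast
  rw [sub_sub_cancel]
  ring

section FinVectors

variable {q : ℕ}

lemma cast_card_univ_erase (i : Fin q) : ((#(univ.erase i) : ℕ) : ℝ) = q - 1 := by
  rw [card_erase_of_mem (mem_univ i), card_univ, Fintype.card_fin, Nat.cast_sub i.pos]
  simp

lemma sum_negMulLog_eq_qaryEntropy_of_flat (hq : 2 ≤ q) {P : Fin q → ℝ} {i : Fin q}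
    (hflat : ∀ j, j ≠ i → P j = (1 - P i) / ((q : ℝ) - 1)) :
    ∑ j, negMulLog (P j) = qaryEntropy q (1 - P i) := by
  rw [← add_sum_erase _ _ (mem_univ i),
    sum_congr rfl fun j hj => by rw [hflat j (ne_of_mem_erase hj)], sum_const, nsmul_eq_mul,
    cast_card_univ_erase, qaryEntropy_one_sub hq]

lemma qaryEntropy_one_sub_eq_tail (hq : 2 ≤ q) {Q : Fin q → ℝ} (hQ1 : ∑ j, Q j = 1)
    (i : Fin q) :
    qaryEntropy q (1 - Q i) = negMulLog (Q i) +
      #(univ.erase i) * negMulLog ((∑ j ∈ univ.erase i, Q j) / #(univ.erase i)) := by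
  rw [sum_erase_eq_sub (mem_univ i), hQ1, cast_card_univ_erase, qaryEntropy_one_sub hq]

lemma sum_negMulLog_le_qaryEntropy (hq : 2 ≤ q) {Q : Fin q → ℝ} (hQ0 : ∀ j, 0 ≤ Q j)
    (hQ1 : ∑ j, Q j = 1) (i : Fin q) :
    ∑ j, negMulLog (Q j) ≤ qaryEntropy q (1 - Q i) := by
  have hne : (univ.erase i).Nonempty := by
    rw [← card_pos, card_erase_of_mem (mem_univ i), card_univ, Fintype.card_fin]
    omega
  rw [qaryEntropy_one_sub_eq_tail hq hQ1, ← add_sum_erase _ _ (mem_univ i)]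
  gcongr
  exact sum_negMulLog_le_card_mul_negMulLog_avg hne fun j _ => hQ0 j

lemma sum_negMulLog_lt_qaryEntropy (hq : 2 ≤ q) {Q : Fin q → ℝ} (hQ0 : ∀ j, 0 ≤ Q j)
    (hQ1 : ∑ j, Q j = 1) {i : Fin q} (hne : ∃ j, j ≠ i ∧ Q j ≠ (1 - Q i) / ((q : ℝ) - 1)) :
    ∑ j, negMulLog (Q j) < qaryEntropy q (1 - Q i) := by
  obtain ⟨j, hji, hj⟩ := hne
  rw [qaryEntropy_one_sub_eq_tail hq hQ1, ← add_sum_erase _ _ (mem_univ i)]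
  gcongr
  refine sum_negMulLog_lt_card_mul_negMulLog_avg (fun j _ => hQ0 j) ⟨j, mem_erase.2 ⟨hji, mem_univ j⟩, ?_⟩
  rwa [sum_erase_eq_sub (mem_univ i), hQ1, cast_card_univ_erase]

variable (hq : 0 < q) {p : Fin q → ℝ}

lemma exists_eq_vmax : ∃ i, p i = vmax q hq p := by
  obtain ⟨i, -, hi⟩ := exists_mem_eq_sup' (⟨⟨0, hq⟩, mem_univ _⟩ : (univ : Finset (Fin q)).Nonempty) p
  exact ⟨i, hi.symm⟩

lemma one_sub_vmax_mem_Icc (hp0 : ∀ i, 0 ≤ p i) (hp1 : ∑ i, p i = 1) :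
    1 - vmax q hq p ∈ Set.Icc 0 (1 - 1 / (q : ℝ)) := by
  obtain ⟨i, hi⟩ := exists_eq_vmax hq (p := p)
  have hle_one : vmax q hq p ≤ 1 := hi ▸ hp1 ▸ single_le_sum (fun j _ => hp0 j) (mem_univ i)
  have hsum : 1 ≤ vmax q hq p * q := by
    calc (1 : ℝ) = ∑ j, p j := hp1.symm
      _ ≤ ∑ _j : Fin q, vmax q hq p := sum_le_sum fun j _ => le_sup' p (mem_univ j)
      _ = vmax q hq p * q := by rw [sum_const, card_univ, Fintype.card_fin, nsmul_eq_mul, mul_comm]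
  have hq' : (0 : ℝ) < q := by exact_mod_cast hq
  constructor
  · linarith
  · rw [one_div, sub_le_sub_iff_left, inv_le_iff_one_le_mul₀ hq']
    exact hsum

end FinVectors

/-- Let `P`, `Q` be probability vectors on `Fin q` (`q ≥ 2`) with
equal Shannon entropies. If the `q - 1` least likely outcomes of `P` are
equally likely, then `max P ≥ max Q`, strictly so if the `q - 1` least likely
outcomes of `Q` are not all equally likely. -/
theorem stmt_6 (q : ℕ) (hq : 2 ≤ q) (P Q : Fin q → ℝ)
    (hP0 : ∀ i, 0 ≤ P i) (hP1 : ∑ i, P i = 1)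
    (hQ0 : ∀ i, 0 ≤ Q i) (hQ1 : ∑ i, Q i = 1)
    (hent : -∑ i, P i * Real.log (P i) = -∑ i, Q i * Real.log (Q i))
    (hPflat : ∃ istar : Fin q, P istar = vmax q (by omega) P ∧
      ∀ j, j ≠ istar → P j = (1 - vmax q (by omega) P) / ((q : ℝ) - 1)) :
    vmax q (by omega) Q ≤ vmax q (by omega) P ∧
    (¬(∃ istar : Fin q, Q istar = vmax q (by omega) Q ∧
        ∀ j, j ≠ istar → Q j = (1 - vmax q (by omega) Q) / ((q : ℝ) - 1)) →
      vmax q (by omega) Q < vmax q (by omega) P) := by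
  have hq0 : 0 < q := by omega
  obtain ⟨istar, hPmax, hPflat⟩ := hPflat
  obtain ⟨i, hQmax⟩ := exists_eq_vmax hq0 (p := Q)
  have hHP : ∑ j, negMulLog (P j) = qaryEntropy q (1 - vmax q hq0 P) :=
    hPmax ▸ sum_negMulLog_eq_qaryEntropy_of_flat hq (hPmax ▸ hPflat)
  have hHQ : ∑ j, negMulLog (Q j) = ∑ j, negMulLog (P j) := by
    simpa only [negMulLog, neg_mul, sum_neg_distrib] using hent.symm
  have hPmem := one_sub_vmax_mem_Icc hq0 hP0 hP1
  have hQmem := one_sub_vmax_mem_Icc hq0 hQ0 hQ1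
  have hmono := qaryEntropy_strictMonoOn hq
  refine ⟨?_, fun hQnotflat => ?_⟩
  · have h := sum_negMulLog_le_qaryEntropy hq hQ0 hQ1 i
    rw [hHQ, hHP, hQmax, hmono.le_iff_le hPmem hQmem] at h
    linarith
  · push Not at hQnotflat
    have h := sum_negMulLog_lt_qaryEntropy hq hQ0 hQ1 (hQmax ▸ hQnotflat i hQmax)
    rw [hHQ, hHP, hQmax, hmono.lt_iff_lt hPmem hQmem] at h
    linarith
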